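/- arXiv:2403.01252 — 3 statements merged into one kernel-verified Lean document; each statement's English description precedes it below -/
import Mathlib

section
/- Let K₁, K₂ ⊆ ℝ² be compact sets with K₁ ∪ K₂ ≠ ∅, and define S₊ := {(a,b,c) ∈ ℝ³ : a·x² + b·x + c > y for all (x,y) ∈ K₁, and a + b·u + c·u² > v for all (u,v) ∈ K₂} and S₋ := {(a,b,c) ∈ ℝ³ : a·x² + b·x + c < y for all (x,y) ∈ K₁, and a + b·u + c·u² < v for all (u,v) ∈ K₂}. Then S₊ and S₋ are disjoint, and the topological space S₊ ∪ S₋ (with the subspace topology of ℝ³) has exactly two connected components, namely S₊ and S₋. -/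
/-!
The value of a section at a fixed abscissa is linear in its coefficients, so `S₊` and `S₋` are
intersections of open half-spaces, hence convex. By compactness, `(M, 0, M) ∈ S₊` and
`(-M, 0, -M) ∈ S₋` for `M` large. Finally, for a fixed point `(x, y)` of `K₁ ∪ K₂`, the value at
`x` of the section minus `y` is continuous in the coefficients, positive on `S₊` and negative on
`S₋`; so it separates the two sets, and no connected subset of the union meets both.
-/

open Set

/-- The section `y = a x² + b x + c` with coefficients `p = (a, b, c)`, in the chart `(x, y)`. -/
def sectionValue (p : ℝ × ℝ × ℝ) (x : ℝ) : ℝ := p.1 * x ^ 2 + p.2.1 * x + p.2.2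

/-- The same section in the chart `(u, v) = (1/x, y/x²)`. -/
def sectionValueAtInfty (p : ℝ × ℝ × ℝ) (u : ℝ) : ℝ := p.1 + p.2.1 * u + p.2.2 * u ^ 2

def sectionsAbove (K₁ K₂ : Set (ℝ × ℝ)) : Set (ℝ × ℝ × ℝ) :=
  {p | (∀ q ∈ K₁, q.2 < sectionValue p q.1) ∧ ∀ q ∈ K₂, q.2 < sectionValueAtInfty p q.1}

def sectionsBelow (K₁ K₂ : Set (ℝ × ℝ)) : Set (ℝ × ℝ × ℝ) :=
  {p | (∀ q ∈ K₁, sectionValue p q.1 < q.2) ∧ ∀ q ∈ K₂, sectionValueAtInfty p q.1 < q.2}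

section Sign

variable {X : Type*} {A B C : Set X} {g : X → ℝ}

theorem disjoint_of_pos_of_neg (hA : ∀ x ∈ A, 0 < g x) (hB : ∀ x ∈ B, g x < 0) :
    Disjoint A B :=
  disjoint_left.2 fun x hxA hxB => lt_asymm (hA x hxA) (hB x hxB)

theorem IsPreconnected.subset_or_subset_of_pos_of_neg [TopologicalSpace X] (hg : Continuous g)
    (hA : ∀ x ∈ A, 0 < g x) (hB : ∀ x ∈ B, g x < 0) (hC : IsPreconnected C)
    (hCAB : C ⊆ A ∪ B) : C ⊆ A ∨ C ⊆ B := by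
  have hsign : C ⊆ {x | 0 < g x} ∪ {x | g x < 0} := fun x hx =>
    (hCAB hx).imp (hA x) (hB x)
  rcases hC.subset_or_subset (isOpen_lt continuous_const hg) (isOpen_lt hg continuous_const)
    (disjoint_of_pos_of_neg (fun _ h => h) fun _ h => h) hsign with hpos | hneg
  · exact Or.inl fun x hx => (hCAB hx).resolve_right fun hxB => lt_asymm (hpos hx) (hB x hxB)
  · exact Or.inr fun x hx => (hCAB hx).resolve_left fun hxA => lt_asymm (hneg hx) (hA x hxA)

end Sign

theorem isLinearMap_sectionValue (x : ℝ) : IsLinearMap ℝ (sectionValue · x) :=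
  ⟨fun p p' => by simp only [sectionValue, Prod.fst_add, Prod.snd_add]; ring,
    fun r p => by simp only [sectionValue, Prod.smul_fst, Prod.smul_snd, smul_eq_mul]; ring⟩

theorem isLinearMap_sectionValueAtInfty (u : ℝ) : IsLinearMap ℝ (sectionValueAtInfty · u) :=
  ⟨fun p p' => by simp only [sectionValueAtInfty, Prod.fst_add, Prod.snd_add]; ring,
    fun r p => by simp only [sectionValueAtInfty, Prod.smul_fst, Prod.smul_snd, smul_eq_mul]; ring⟩

variable {K₁ K₂ : Set (ℝ × ℝ)}

theorem convex_sectionsAbove : Convex ℝ (sectionsAbove K₁ K₂) := by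
  have hsplit : sectionsAbove K₁ K₂ = (⋂ q ∈ K₁, {p | q.2 < sectionValue p q.1}) ∩
      ⋂ q ∈ K₂, {p | q.2 < sectionValueAtInfty p q.1} := by
    ext; simp [sectionsAbove]
  rw [hsplit]
  refine .inter (convex_iInter₂ fun q _ => ?_) (convex_iInter₂ fun q _ => ?_)
  exacts [convex_halfSpace_gt (isLinearMap_sectionValue q.1) q.2,
    convex_halfSpace_gt (isLinearMap_sectionValueAtInfty q.1) q.2]

theorem convex_sectionsBelow : Convex ℝ (sectionsBelow K₁ K₂) := by
  have hsplit : sectionsBelow K₁ K₂ = (⋂ q ∈ K₁, {p | sectionValue p q.1 < q.2}) ∩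
      ⋂ q ∈ K₂, {p | sectionValueAtInfty p q.1 < q.2} := by
    ext; simp [sectionsBelow]
  rw [hsplit]
  refine .inter (convex_iInter₂ fun q _ => ?_) (convex_iInter₂ fun q _ => ?_)
  exacts [convex_halfSpace_lt (isLinearMap_sectionValue q.1) q.2,
    convex_halfSpace_lt (isLinearMap_sectionValueAtInfty q.1) q.2]

theorem IsCompact.exists_abs_snd_lt {K : Set (ℝ × ℝ)} (hK : IsCompact K) :
    ∃ M, 0 < M ∧ ∀ q ∈ K, |q.2| < M := by
  obtain ⟨C, hC⟩ := hK.exists_bound_of_continuousOn continuous_snd.continuousOn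
  exact ⟨|C| + 1, by positivity, fun q hq => by
    have := hC q hq; rw [Real.norm_eq_abs] at this; linarith [le_abs_self C]⟩

theorem sectionsAbove_nonempty (hK : IsCompact (K₁ ∪ K₂)) :
    (sectionsAbove K₁ K₂).Nonempty := by
  obtain ⟨M, hM, hMK⟩ := hK.exists_abs_snd_lt
  refine ⟨(M, 0, M), fun q hq => ?_, fun q hq => ?_⟩
  · have := (abs_lt.1 (hMK q (.inl hq))).2
    simp only [sectionValue]; nlinarith [sq_nonneg q.1]
  · have := (abs_lt.1 (hMK q (.inr hq))).2
    simp only [sectionValueAtInfty]; nlinarith [sq_nonneg q.1]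

theorem sectionsBelow_nonempty (hK : IsCompact (K₁ ∪ K₂)) :
    (sectionsBelow K₁ K₂).Nonempty := by
  obtain ⟨M, hM, hMK⟩ := hK.exists_abs_snd_lt
  refine ⟨(-M, 0, -M), fun q hq => ?_, fun q hq => ?_⟩
  · have := (abs_lt.1 (hMK q (.inl hq))).1
    simp only [sectionValue]; nlinarith [sq_nonneg q.1]
  · have := (abs_lt.1 (hMK q (.inr hq))).1
    simp only [sectionValueAtInfty]; nlinarith [sq_nonneg q.1]

theorem exists_continuous_pos_on_sectionsAbove_neg_on_sectionsBelow (hne : (K₁ ∪ K₂).Nonempty) :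
    ∃ g : ℝ × ℝ × ℝ → ℝ, Continuous g ∧ (∀ p ∈ sectionsAbove K₁ K₂, 0 < g p) ∧
      ∀ p ∈ sectionsBelow K₁ K₂, g p < 0 := by
  obtain ⟨q, hq | hq⟩ := hne
  · refine ⟨fun p => sectionValue p q.1 - q.2, by unfold sectionValue; fun_prop,
      fun p hp => sub_pos.2 (hp.1 q hq), fun p hp => sub_neg.2 (hp.1 q hq)⟩
  · refine ⟨fun p => sectionValueAtInfty p q.1 - q.2, by unfold sectionValueAtInfty; fun_prop,
      fun p hp => sub_pos.2 (hp.2 q hq), fun p hp => sub_neg.2 (hp.2 q hq)⟩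

/-- For compact `K₁, K₂ ⊆ ℝ²` with `K₁ ∪ K₂ ≠ ∅`, the sets `S₊` (here `Sp`)
and `S₋` (here `Sn`) of non-separating coefficient triples are disjoint, and the subspace
`S₊ ∪ S₋` of `ℝ³` has exactly two connected components, namely `S₊` and `S₋`:
both are nonempty and connected, and every connected subset of the union lies in one of them. -/
theorem stmt_1 (K₁ K₂ : Set (ℝ × ℝ)) (hK₁ : IsCompact K₁) (hK₂ : IsCompact K₂)
    (hne : (K₁ ∪ K₂).Nonempty)
    (Sp Sn : Set (ℝ × ℝ × ℝ))
    (hSp : Sp = {p : ℝ × ℝ × ℝ |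
      (∀ q ∈ K₁, p.1 * q.1 ^ 2 + p.2.1 * q.1 + p.2.2 > q.2) ∧
      (∀ q ∈ K₂, p.1 + p.2.1 * q.1 + p.2.2 * q.1 ^ 2 > q.2)})
    (hSn : Sn = {p : ℝ × ℝ × ℝ |
      (∀ q ∈ K₁, p.1 * q.1 ^ 2 + p.2.1 * q.1 + p.2.2 < q.2) ∧
      (∀ q ∈ K₂, p.1 + p.2.1 * q.1 + p.2.2 * q.1 ^ 2 < q.2)}) :
    Disjoint Sp Sn ∧ Sp.Nonempty ∧ Sn.Nonempty ∧
    IsConnected Sp ∧ IsConnected Sn ∧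
    (∀ C : Set (ℝ × ℝ × ℝ), C ⊆ Sp ∪ Sn → IsPreconnected C → C ⊆ Sp ∨ C ⊆ Sn) := by
  obtain rfl : Sp = sectionsAbove K₁ K₂ := hSp
  obtain rfl : Sn = sectionsBelow K₁ K₂ := hSn
  obtain ⟨g, hg, hpos, hneg⟩ := exists_continuous_pos_on_sectionsAbove_neg_on_sectionsBelow hne
  have hSp_ne := sectionsAbove_nonempty (hK₁.union hK₂)
  have hSn_ne := sectionsBelow_nonempty (hK₁.union hK₂)
  exact ⟨disjoint_of_pos_of_neg hpos hneg, hSp_ne, hSn_ne,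
    ⟨hSp_ne, convex_sectionsAbove.isPreconnected⟩, ⟨hSn_ne, convex_sectionsBelow.isPreconnected⟩,
    fun C hC hCconn => hCconn.subset_or_subset_of_pos_of_neg hg hpos hneg hC⟩
end

section
/- Let b ≥ 3 be an odd integer and let L = ℤ² carry the symmetric bilinear form with Gram matrix [[−2, b], [b, −2]] in the standard basis u = (1,0), v = (0,1). Then the group of ℤ-linear isometries of L is generated by the three elements: −id, the swap σ(x₁, x₂) = (x₂, x₁), and the reflection r_v given by r_v(x) = x + B(x, v)·v (where B denotes the bilinear form). -/
/-!
A vector `w = (p, q)` is a root (`w² = −2`) exactly when `p² − b p q + q² = 1`. Such solutions have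
coordinates of equal sign, and Vieta jumping — the reflections `r_v : (p, q) ↦ (p, b p − q)` and
`r_u : (p, q) ↦ (b q − p, q)` — strictly decreases `p + q` down to `(1, 0)` or `(0, 1)`; so the
generated group moves every root to `u`. An isometry `k` fixing `u` sends `v` to a root `z` with
`u · z = −2 z₀ + b z₁ = b`; for odd `b` this makes `z₁` odd, so `z = (b t, 2 t + 1)`, and then
`z² = −2` reads `t (t + 1) (b² − 4) = 0`. Hence `z = v` or `z = −r_u v`, i.e. `k = 1` or `k = −r_u`.
-/

def gramB (b : ℤ) (x y : Fin 2 → ℤ) : ℤ :=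
  -2 * x 0 * y 0 + b * x 0 * y 1 + b * x 1 * y 0 + -2 * x 1 * y 1

def vecV : Fin 2 → ℤ := ![0, 1]

def reflV (b : ℤ) : (Fin 2 → ℤ) ≃ₗ[ℤ] (Fin 2 → ℤ) where
  toFun x := x + gramB b x vecV • vecV
  invFun x := x + gramB b x vecV • vecV
  map_add' x y := by
    funext i
    fin_cases i <;>
      simp [gramB, vecV, Matrix.vecHead, Matrix.vecTail, Pi.add_apply, Pi.smul_apply, smul_eq_mul] <;> ring
  map_smul' c x := by
    funext i
    fin_cases i <;>
      simp [gramB, vecV, Matrix.vecHead, Matrix.vecTail, Pi.add_apply, Pi.smul_apply, smul_eq_mul] <;> ring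
  left_inv x := by
    funext i
    fin_cases i <;>
      simp [gramB, vecV, Matrix.vecHead, Matrix.vecTail, Pi.add_apply, Pi.smul_apply, smul_eq_mul] <;> ring
  right_inv x := by
    funext i
    fin_cases i <;>
      simp [gramB, vecV, Matrix.vecHead, Matrix.vecTail, Pi.add_apply, Pi.smul_apply, smul_eq_mul] <;> ring

local notation "Aut₂" => (Fin 2 → ℤ) ≃ₗ[ℤ] (Fin 2 → ℤ)

def isometryGroup (R : Type*) {M N : Type*} [Semiring R] [AddCommMonoid M] [Module R M]
    (B : M → M → N) : Subgroup (M ≃ₗ[R] M) where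
  carrier := {g | ∀ x y, B (g x) (g y) = B x y}
  one_mem' _ _ := rfl
  mul_mem' hf hg x y := (hf _ _).trans (hg x y)
  inv_mem' {g} hg x y := by simpa using (hg (g⁻¹ x) (g⁻¹ y)).symm

@[simp]
lemma mem_isometryGroup {R M N : Type*} [Semiring R] [AddCommMonoid M] [Module R M]
    {B : M → M → N} {g : M ≃ₗ[R] M} : g ∈ isometryGroup R B ↔ ∀ x y, B (g x) (g y) = B x y :=
  Iff.rfl

namespace LatticeMinusTwo

def vecU : Fin 2 → ℤ := ![1, 0]

def swapUV : Aut₂ := LinearEquiv.funCongrLeft ℤ ℤ (Equiv.swap (0 : Fin 2) 1)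

def reflU (b : ℤ) : Aut₂ := swapUV * reflV b * swapUV

def generators (b : ℤ) : Set Aut₂ := {LinearEquiv.neg ℤ, swapUV, reflV b}

variable {b : ℤ}

lemma swapUV_apply (x : Fin 2 → ℤ) : swapUV x = ![x 1, x 0] := by
  ext i
  fin_cases i <;> simp [swapUV, LinearEquiv.funCongrLeft_apply, LinearMap.funLeft_apply]

lemma reflV_apply (x : Fin 2 → ℤ) : reflV b x = ![x 0, b * x 0 - x 1] := by
  ext i
  fin_cases i
  · simp [reflV, vecV, Matrix.vecHead]
  · simp [reflV, gramB, vecV, Matrix.vecHead, Matrix.vecTail]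
    ring

lemma reflU_apply (x : Fin 2 → ℤ) : reflU b x = ![b * x 1 - x 0, x 1] := by
  simp [reflU, LinearEquiv.mul_apply, swapUV_apply, reflV_apply]

lemma neg_apply (x : Fin 2 → ℤ) : LinearEquiv.neg ℤ x = ![-x 0, -x 1] := by
  ext i
  fin_cases i <;> simp

lemma gramB_self_eq_neg_two_iff {x : Fin 2 → ℤ} :
    gramB b x x = -2 ↔ x 0 ^ 2 - b * x 0 * x 1 + x 1 ^ 2 = 1 := by
  rw [gramB]; constructor <;> intro h <;> linarith

@[simp] lemma gramB_vecU_vecU : gramB b vecU vecU = -2 := by simp [gramB, vecU]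

@[simp] lemma gramB_vecU_vecV : gramB b vecU vecV = b := by simp [gramB, vecU, vecV]

@[simp] lemma gramB_vecV_vecV : gramB b vecV vecV = -2 := by simp [gramB, vecV]

lemma ext_of_apply_vecU_vecV {f g : Aut₂} (hu : f vecU = g vecU) (hv : f vecV = g vecV) :
    f = g := by
  ext x : 1
  have hx : x = x 0 • vecU + x 1 • vecV := by
    ext i
    fin_cases i <;> simp [vecU, vecV]
  rw [hx, map_add, map_add, map_smul, map_smul, map_smul, map_smul, hu, hv]

lemma closure_generators_le_isometryGroup :
    Subgroup.closure (generators b) ≤ isometryGroup ℤ (gramB b) := by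
  refine (Subgroup.closure_le _).2 ?_
  rintro g (rfl | rfl | rfl) x y <;>
    simp only [neg_apply, swapUV_apply, reflV_apply, gramB, Matrix.cons_val_zero,
      Matrix.cons_val_one, Matrix.cons_val_fin_one] <;>
    ring

lemma neg_mem_closure : LinearEquiv.neg ℤ ∈ Subgroup.closure (generators b) :=
  Subgroup.subset_closure (by simp [generators])

lemma swapUV_mem_closure : swapUV ∈ Subgroup.closure (generators b) :=
  Subgroup.subset_closure (by simp [generators])

lemma reflV_mem_closure : reflV b ∈ Subgroup.closure (generators b) :=
  Subgroup.subset_closure (by simp [generators])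

lemma reflU_mem_closure : reflU b ∈ Subgroup.closure (generators b) :=
  mul_mem (mul_mem swapUV_mem_closure reflV_mem_closure) swapUV_mem_closure

lemma mul_nonneg_of_sq_sub_mul_add_sq_eq_one {p q : ℤ} (hb : 0 ≤ b)
    (h : p ^ 2 - b * p * q + q ^ 2 = 1) : 0 ≤ p * q := by
  by_contra! hpq
  have hp : p ≠ 0 := by rintro rfl; simp at hpq
  have hq : q ≠ 0 := by rintro rfl; simp at hpq
  nlinarith [sq_pos_of_ne_zero hp, sq_pos_of_ne_zero hq]

lemma vieta_jump {p q : ℤ} (hp : 0 < p) (hpq : p < q) (h : p ^ 2 - b * p * q + q ^ 2 = 1) :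
    0 ≤ b * p - q ∧ b * p - q < q := by
  have hprod : q * (b * p - q) = p ^ 2 - 1 := by linear_combination -h
  constructor <;> nlinarith

lemma exists_mem_closure_apply_eq_vecU_of_nonneg (hb : 3 ≤ b) {p q : ℤ} (hp : 0 ≤ p) (hq : 0 ≤ q)
    (h : p ^ 2 - b * p * q + q ^ 2 = 1) :
    ∃ g ∈ Subgroup.closure (generators b), g ![p, q] = vecU := by
  obtain ⟨n, hn⟩ : ∃ n, (p + q).toNat = n := ⟨_, rfl⟩
  induction n using Nat.strong_induction_on generalizing p q with
  | _ n ih =>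
  rcases hq.eq_or_lt with rfl | hq
  · refine ⟨1, one_mem _, ?_⟩
    have : p = 1 := by nlinarith
    simp [this, vecU]
  rcases hp.eq_or_lt with rfl | hp
  · refine ⟨swapUV, swapUV_mem_closure, ?_⟩
    have : q = 1 := by nlinarith
    simp [this, vecU, swapUV_apply]
  rcases lt_trichotomy p q with hpq | rfl | hpq
  · obtain ⟨h0, hlt⟩ := vieta_jump hp hpq h
    obtain ⟨g, hg, hgpq⟩ := ih _ (by omega) hp.le h0 (by linear_combination h) rfl
    refine ⟨g * reflV b, mul_mem hg reflV_mem_closure, ?_⟩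
    simpa [LinearEquiv.mul_apply, reflV_apply] using hgpq
  · nlinarith -- `(2 - b) p² = 1` is impossible for `b ≥ 3`
  · obtain ⟨h0, hlt⟩ := vieta_jump (b := b) hq hpq (by linear_combination h)
    obtain ⟨g, hg, hgpq⟩ := ih _ (by omega) h0 hq.le (by linear_combination h) rfl
    refine ⟨g * reflU b, mul_mem hg reflU_mem_closure, ?_⟩
    simpa [LinearEquiv.mul_apply, reflU_apply] using hgpq

lemma exists_mem_closure_apply_eq_vecU (hb : 3 ≤ b) {w : Fin 2 → ℤ} (hw : gramB b w w = -2) :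
    ∃ g ∈ Subgroup.closure (generators b), g w = vecU := by
  have h := gramB_self_eq_neg_two_iff.1 hw
  have hw_eq : w = ![w 0, w 1] := by ext i; fin_cases i <;> rfl
  rcases mul_nonneg_iff.1 (mul_nonneg_of_sq_sub_mul_add_sq_eq_one (by omega) h) with
    ⟨h0, h1⟩ | ⟨h0, h1⟩
  · rw [hw_eq]
    exact exists_mem_closure_apply_eq_vecU_of_nonneg hb h0 h1 h
  · obtain ⟨g, hg, hgw⟩ := exists_mem_closure_apply_eq_vecU_of_nonneg hb (neg_nonneg.2 h0)
      (neg_nonneg.2 h1) (by linear_combination h)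
    refine ⟨g * LinearEquiv.neg ℤ, mul_mem hg neg_mem_closure, ?_⟩
    rw [LinearEquiv.mul_apply, neg_apply]
    exact hgw

lemma eq_vecV_or_eq_of_gramB_vecU (hb : 3 ≤ b) (hodd : Odd b) {z : Fin 2 → ℤ}
    (hu : gramB b vecU z = b) (hz : gramB b z z = -2) : z = vecV ∨ z = ![-b, -1] := by
  replace hu : -2 * z 0 + b * z 1 = b := by simpa [gramB, vecU] using hu
  rw [gramB_self_eq_neg_two_iff] at hz
  obtain ⟨m, hm⟩ := hodd
  obtain ⟨t, h1⟩ : ∃ t, z 1 = 2 * t + 1 :=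
    ⟨z 0 - m * z 1 + m, by linear_combination hu - (z 1 - 1) * hm⟩
  have h0 : z 0 = b * t := by
    linarith [show 2 * z 0 = 2 * (b * t) by linear_combination -hu + b * h1]
  have ht : t * (t + 1) * (b ^ 2 - 4) = 0 := by
    rw [h0, h1] at hz; linear_combination -hz
  have hb4 : b ^ 2 - 4 ≠ 0 := by nlinarith
  rcases mul_eq_zero.1 ((mul_eq_zero.1 ht).resolve_right hb4) with ht | ht
  · left; ext i; fin_cases i <;> simp [vecV, h0, h1, ht]
  · right; ext i; fin_cases i <;> simp [h0, h1, show t = -1 by linarith]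

lemma eq_one_or_eq_neg_mul_reflU (hb : 3 ≤ b) (hodd : Odd b) {k : Aut₂}
    (hk : k ∈ isometryGroup ℤ (gramB b)) (hku : k vecU = vecU) :
    k = 1 ∨ k = LinearEquiv.neg ℤ * reflU b := by
  rw [mem_isometryGroup] at hk
  have hu : gramB b vecU (k vecV) = b := by rw [← hku, hk, gramB_vecU_vecV]
  have hv : gramB b (k vecV) (k vecV) = -2 := by rw [hk, gramB_vecV_vecV]
  rcases eq_vecV_or_eq_of_gramB_vecU hb hodd hu hv with hkv | hkv
  · exact .inl (ext_of_apply_vecU_vecV hku hkv)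
  · refine .inr (ext_of_apply_vecU_vecV ?_ ?_)
    · rw [hku]; simp [LinearEquiv.mul_apply, reflU_apply, neg_apply, vecU]
    · rw [hkv]; simp [LinearEquiv.mul_apply, reflU_apply, neg_apply, vecV]

end LatticeMinusTwo

open LatticeMinusTwo in
/-- For odd `b ≥ 3`, the group of ℤ-linear isometries of the lattice
`[−2, b, −2]` is generated by `−id`, the swap `u ↔ v`, and the reflection `r_v`. -/
theorem stmt_11 (b : ℤ) (hb : 3 ≤ b) (hodd : Odd b) :
    (∀ g ∈ Subgroup.closure
        ({LinearEquiv.neg ℤ, LinearEquiv.funCongrLeft ℤ ℤ (Equiv.swap (0 : Fin 2) 1), reflV b} :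
          Set ((Fin 2 → ℤ) ≃ₗ[ℤ] (Fin 2 → ℤ))),
      ∀ x y : Fin 2 → ℤ, gramB b (g x) (g y) = gramB b x y) ∧
    (∀ g : (Fin 2 → ℤ) ≃ₗ[ℤ] (Fin 2 → ℤ),
      (∀ x y : Fin 2 → ℤ, gramB b (g x) (g y) = gramB b x y) →
      g ∈ Subgroup.closure
        ({LinearEquiv.neg ℤ, LinearEquiv.funCongrLeft ℤ ℤ (Equiv.swap (0 : Fin 2) 1), reflV b} :
          Set ((Fin 2 → ℤ) ≃ₗ[ℤ] (Fin 2 → ℤ)))) := by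
  change (∀ g ∈ Subgroup.closure (generators b), g ∈ isometryGroup ℤ (gramB b)) ∧
    ∀ g ∈ isometryGroup ℤ (gramB b), g ∈ Subgroup.closure (generators b)
  refine ⟨fun g hg => closure_generators_le_isometryGroup hg, fun g hg => ?_⟩
  obtain ⟨h, hh, hgu⟩ :=
    exists_mem_closure_apply_eq_vecU hb (w := g vecU) (by rw [hg, gramB_vecU_vecU])
  have hk : h * g ∈ isometryGroup ℤ (gramB b) :=
    mul_mem (closure_generators_le_isometryGroup hh) hg
  rw [show g = h⁻¹ * (h * g) by group]
  refine mul_mem (inv_mem hh) ?_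
  rcases eq_one_or_eq_neg_mul_reflU hb hodd hk hgu with hk1 | hk1 <;> rw [hk1]
  · exact one_mem _
  · exact mul_mem neg_mem_closure reflU_mem_closure
end

section
/- Let L be a free ℤ-module of finite rank with a ℤ-valued symmetric bilinear form x·y, and let M₁, M₂ ⊆ L be submodules such that M₁ ∩ M₂ = 0, m₁·m₂ = 0 for all m₁ ∈ M₁ and m₂ ∈ M₂, and 2L ⊆ M₁ + M₂. Then there is a unique ℤ-linear map θ : L → L with θ(m) = m for all m ∈ M₁ and θ(m) = −m for all m ∈ M₂; explicitly, θ(x) = x − m₂ whenever 2x = m₁ + m₂ with mᵢ ∈ Mᵢ. Moreover θ is an involution (θ∘θ = id) and an isometry (θ(x)·θ(y) = x·y for all x, y ∈ L). -/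
/-!
Since `M₁ ∩ M₂ = 0`, every `2x` splits uniquely as `m₁ + m₂`, and the `M₂`-component `m₂` depends
linearly on `x`; so `θ x = x - m₂` is linear, and it is `±id` on `Mᵢ`. Any other such map agrees
with it on `M₁ + M₂ ⊇ 2L`, hence everywhere because `L` has no `2`-torsion. Doubling, `θ` is an
isometry because `M₁ ⊥ M₂`: `B(m₁ - m₂, n₁ - n₂) = B(m₁ + m₂, n₁ + n₂)`.
-/

namespace Submodule

variable {R M : Type*} [Ring R] [AddCommGroup M] [Module R M] {M₁ M₂ : Submodule R M}

theorem injective_coprod_subtype (h : Disjoint M₁ M₂) :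
    Function.Injective (M₁.subtype.coprod M₂.subtype) := by
  rw [← LinearMap.ker_eq_bot, LinearMap.ker_coprod_of_disjoint_range] <;> simp [h]

noncomputable def sndOfDisjoint (h : Disjoint M₁ M₂) : ↥(M₁ ⊔ M₂) →ₗ[R] M₂ :=
  LinearMap.snd R M₁ M₂ ∘ₗ
    (LinearEquiv.ofInjective _ (injective_coprod_subtype h)).symm.toLinearMap ∘ₗ
    (LinearEquiv.ofEq _ _ (sup_eq_range M₁ M₂)).toLinearMap

theorem sndOfDisjoint_apply_add (h : Disjoint M₁ M₂) {m₁ m₂ : M} (h₁ : m₁ ∈ M₁) (h₂ : m₂ ∈ M₂) :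
    (sndOfDisjoint h ⟨m₁ + m₂, add_mem_sup h₁ h₂⟩ : M) = m₂ := by
  have : LinearEquiv.ofEq _ _ (sup_eq_range M₁ M₂) ⟨m₁ + m₂, add_mem_sup h₁ h₂⟩ =
      LinearEquiv.ofInjective _ (injective_coprod_subtype h) (⟨m₁, h₁⟩, ⟨m₂, h₂⟩) := rfl
  simp [sndOfDisjoint, this]

end Submodule

theorem LinearMap.ext_of_smul_mem {R M P : Type*} [CommRing R] [AddCommGroup M] [Module R M]
    [AddCommGroup P] [Module R P] {N : Submodule R M} {c : R} (hc : IsSMulRegular P c)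
    (hN : ∀ x, c • x ∈ N) {f g : M →ₗ[R] P} (h : Set.EqOn f g N) : f = g :=
  LinearMap.ext fun x => hc <| show c • f x = c • g x by
    rw [← map_smul, ← map_smul]; exact h (hN x)

namespace Submodule

variable {R M : Type*} [CommRing R] [AddCommGroup M] [Module R M] {M₁ M₂ : Submodule R M}
  (hd : Disjoint M₁ M₂) (h2 : ∀ x : M, (2 : R) • x ∈ M₁ ⊔ M₂)

noncomputable def reflectionOfDisjoint : M →ₗ[R] M :=
  LinearMap.id - M₂.subtype ∘ₗ sndOfDisjoint hd ∘ₗ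
    LinearMap.codRestrict (M₁ ⊔ M₂) ((2 : R) • LinearMap.id) h2

theorem reflectionOfDisjoint_apply_of_two_smul_eq {x m₁ m₂ : M} (h₁ : m₁ ∈ M₁) (h₂ : m₂ ∈ M₂)
    (hx : (2 : R) • x = m₁ + m₂) : reflectionOfDisjoint hd h2 x = x - m₂ := by
  have : LinearMap.codRestrict (M₁ ⊔ M₂) ((2 : R) • LinearMap.id) h2 x =
      ⟨m₁ + m₂, add_mem_sup h₁ h₂⟩ := Subtype.ext hx
  simp [reflectionOfDisjoint, this, sndOfDisjoint_apply_add hd h₁ h₂]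

theorem reflectionOfDisjoint_apply_of_mem_left {m : M} (hm : m ∈ M₁) :
    reflectionOfDisjoint hd h2 m = m := by
  simpa using reflectionOfDisjoint_apply_of_two_smul_eq hd h2 (M₁.smul_mem 2 hm) M₂.zero_mem
    (add_zero _).symm

theorem reflectionOfDisjoint_apply_of_mem_right {m : M} (hm : m ∈ M₂) :
    reflectionOfDisjoint hd h2 m = -m := by
  rw [reflectionOfDisjoint_apply_of_two_smul_eq hd h2 M₁.zero_mem (M₂.smul_mem 2 hm)
    (zero_add _).symm, two_smul]
  abel

theorem reflectionOfDisjoint_reflectionOfDisjoint (x : M) :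
    reflectionOfDisjoint hd h2 (reflectionOfDisjoint hd h2 x) = x := by
  obtain ⟨m₁, h₁, m₂, h₂, hx⟩ := mem_sup.mp (h2 x)
  have hθx : (2 : R) • reflectionOfDisjoint hd h2 x = m₁ + -m₂ := by
    rw [reflectionOfDisjoint_apply_of_two_smul_eq hd h2 h₁ h₂ hx.symm, smul_sub, ← hx, two_smul]
    abel
  rw [reflectionOfDisjoint_apply_of_two_smul_eq hd h2 h₁ (neg_mem h₂) hθx,
    reflectionOfDisjoint_apply_of_two_smul_eq hd h2 h₁ h₂ hx.symm]
  abel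

theorem eq_reflectionOfDisjoint (hreg : IsSMulRegular M (2 : R)) {θ : M →ₗ[R] M}
    (hθ₁ : ∀ m ∈ M₁, θ m = m) (hθ₂ : ∀ m ∈ M₂, θ m = -m) : θ = reflectionOfDisjoint hd h2 :=
  LinearMap.ext_of_smul_mem hreg h2 <| LinearMap.eqOn_sup
    (fun m hm => by rw [hθ₁ m hm, reflectionOfDisjoint_apply_of_mem_left hd h2 hm])
    (fun m hm => by rw [hθ₂ m hm, reflectionOfDisjoint_apply_of_mem_right hd h2 hm])

theorem reflectionOfDisjoint_isometry {P : Type*} [AddCommGroup P] [Module R P]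
    (hreg : IsSMulRegular P (2 : R)) (B : M →ₗ[R] M →ₗ[R] P) (hsym : ∀ x y, B x y = B y x)
    (horth : ∀ m₁ ∈ M₁, ∀ m₂ ∈ M₂, B m₁ m₂ = 0) (x y : M) :
    B (reflectionOfDisjoint hd h2 x) (reflectionOfDisjoint hd h2 y) = B x y := by
  obtain ⟨a₁, ha₁, a₂, ha₂, hx⟩ := mem_sup.mp (h2 x)
  obtain ⟨b₁, hb₁, b₂, hb₂, hy⟩ := mem_sup.mp (h2 y)
  have hθ : ∀ {z m₁ m₂}, m₁ ∈ M₁ → m₂ ∈ M₂ → m₁ + m₂ = (2 : R) • z →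
      (2 : R) • reflectionOfDisjoint hd h2 z = m₁ - m₂ := fun h₁ h₂ hz => by
    rw [← map_smul, ← hz, map_add, reflectionOfDisjoint_apply_of_mem_left hd h2 h₁,
      reflectionOfDisjoint_apply_of_mem_right hd h2 h₂, sub_eq_add_neg]
  apply hreg; apply hreg
  calc (2 : R) • (2 : R) • B (reflectionOfDisjoint hd h2 x) (reflectionOfDisjoint hd h2 y)
      = B (a₁ - a₂) (b₁ - b₂) := by
        rw [← hθ ha₁ ha₂ hx, ← hθ hb₁ hb₂ hy, map_smul, map_smul, LinearMap.smul_apply,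
          smul_comm]
    _ = B (a₁ + a₂) (b₁ + b₂) := by
      simp only [map_add, map_sub, LinearMap.add_apply, LinearMap.sub_apply, horth _ ha₁ _ hb₂,
        hsym a₂ b₁, horth _ hb₁ _ ha₂]
      abel
    _ = (2 : R) • (2 : R) • B x y := by
      rw [hx, hy, map_smul, map_smul, LinearMap.smul_apply, smul_comm]

end Submodule

open Submodule in
theorem stmt_16_general (L : Type*) [AddCommGroup L] [Module ℤ L] [Module.Free ℤ L]
    (B : L →ₗ[ℤ] L →ₗ[ℤ] ℤ) (hsym : ∀ x y, B x y = B y x)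
    (M₁ M₂ : Submodule ℤ L) (hdisj : M₁ ⊓ M₂ = ⊥)
    (horth : ∀ m₁ ∈ M₁, ∀ m₂ ∈ M₂, B m₁ m₂ = 0)
    (h2 : ∀ x : L, (2 : ℤ) • x ∈ M₁ ⊔ M₂) :
    (∃! θ : L →ₗ[ℤ] L, (∀ m ∈ M₁, θ m = m) ∧ (∀ m ∈ M₂, θ m = -m)) ∧
    (∀ θ : L →ₗ[ℤ] L, ((∀ m ∈ M₁, θ m = m) ∧ (∀ m ∈ M₂, θ m = -m)) →
      ((∀ (x m₁ m₂ : L), m₁ ∈ M₁ → m₂ ∈ M₂ → (2 : ℤ) • x = m₁ + m₂ → θ x = x - m₂) ∧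
       (∀ x, θ (θ x) = x) ∧
       (∀ x y, B (θ x) (θ y) = B x y))) := by
  -- `(2 : ℤ) • x` in the statement is `zsmul`, not the action of the `Module ℤ L` instance
  simp only [← Int.cast_smul_eq_zsmul ℤ, Int.cast_ofNat] at h2 ⊢
  have hd : Disjoint M₁ M₂ := disjoint_iff.mpr hdisj
  have hθ : ∀ θ : L →ₗ[ℤ] L, ((∀ m ∈ M₁, θ m = m) ∧ (∀ m ∈ M₂, θ m = -m)) →
      θ = reflectionOfDisjoint hd h2 := fun θ ⟨hθ₁, hθ₂⟩ =>
    eq_reflectionOfDisjoint hd h2 (.of_ne_zero (M := L) (two_ne_zero (α := ℤ))) hθ₁ hθ₂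
  refine ⟨⟨_, ⟨fun m => reflectionOfDisjoint_apply_of_mem_left hd h2,
    fun m => reflectionOfDisjoint_apply_of_mem_right hd h2⟩, hθ⟩, fun θ h => ?_⟩
  obtain rfl := hθ θ h
  exact ⟨fun x m₁ m₂ => reflectionOfDisjoint_apply_of_two_smul_eq hd h2,
    reflectionOfDisjoint_reflectionOfDisjoint hd h2,
    reflectionOfDisjoint_isometry hd h2 (.of_ne_zero (two_ne_zero (α := ℤ))) B hsym horth⟩

/-- If `M₁, M₂` are submodules of a lattice `L` with `M₁ ∩ M₂ = 0`,
`M₁ ⊥ M₂`, and `2L ⊆ M₁ + M₂`, then there is a unique ℤ-linear `θ : L → L` with `θ = id`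
on `M₁` and `θ = −id` on `M₂`; it satisfies `θx = x − m₂` whenever `2x = m₁ + m₂`
(`mᵢ ∈ Mᵢ`), is an involution, and an isometry. -/
theorem stmt_16 (L : Type*) [AddCommGroup L] [Module ℤ L] [Module.Free ℤ L] [Module.Finite ℤ L]
    (B : L →ₗ[ℤ] L →ₗ[ℤ] ℤ) (hsym : ∀ x y, B x y = B y x)
    (M₁ M₂ : Submodule ℤ L) (hdisj : M₁ ⊓ M₂ = ⊥)
    (horth : ∀ m₁ ∈ M₁, ∀ m₂ ∈ M₂, B m₁ m₂ = 0)
    (h2 : ∀ x : L, (2 : ℤ) • x ∈ M₁ ⊔ M₂) :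
    (∃! θ : L →ₗ[ℤ] L, (∀ m ∈ M₁, θ m = m) ∧ (∀ m ∈ M₂, θ m = -m)) ∧
    (∀ θ : L →ₗ[ℤ] L, ((∀ m ∈ M₁, θ m = m) ∧ (∀ m ∈ M₂, θ m = -m)) →
      ((∀ (x m₁ m₂ : L), m₁ ∈ M₁ → m₂ ∈ M₂ → (2 : ℤ) • x = m₁ + m₂ → θ x = x - m₂) ∧
       (∀ x, θ (θ x) = x) ∧
       (∀ x y, B (θ x) (θ y) = B x y))) :=
  stmt_16_general L B hsym M₁ M₂ hdisj horth h2
end
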